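/- arXiv:2309.04291 — 2 statements merged into one kernel-verified Lean document; each statement's English description precedes it below -/
import Mathlib

section
/- For every d ≥ 2 there exists a d-regular graph G with χ_s(G) = ⌈(d+4)/2⌉; that is, the lower bound ⌈(d+4)/2⌉ on the star chromatic number of d-regular graphs is attained for every d ≥ 2. -/
/-- A star colouring: a proper colouring with no bicoloured 4-vertex path. -/
def IsStarColoring {V : Type*} {α : Type*} (G : SimpleGraph V) (f : V → α) : Prop :=
  (∀ ⦃u v : V⦄, G.Adj u v → f u ≠ f v) ∧
  ∀ ⦃a b c d : V⦄, G.Adj a b → G.Adj b c → G.Adj c d →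
    a ≠ c → a ≠ d → b ≠ d → ¬(f a = f c ∧ f b = f d)


abbrev Vq (q : ℕ) [NeZero q] : Type := {x : ZMod q × ZMod q // x.1 ≠ x.2}


lemma star_lower_bound {V : Type} [Fintype V] [Nonempty V]
    (G : SimpleGraph V) {d k : ℕ} (hd : 2 ≤ d)
    (hreg : ∀ v, (G.neighborSet v).ncard = d) {f : V → Fin k}
    (hf : IsStarColoring G f) : (d + 5) / 2 ≤ k := by
  classical
  obtain ⟨hprop, hstar⟩ := hf
  set nb : V → Finset V := fun v => (G.neighborSet v).toFinset with hnbdef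
  have hnb : ∀ v u, u ∈ nb v ↔ G.Adj v u := by
    intro v u; simp [hnbdef, SimpleGraph.mem_neighborSet]
  have hcard : ∀ v, (nb v).card = d := by
    intro v; rw [← hreg v]; exact (Set.ncard_eq_toFinset_card' _).symm
  by_cases hrb : ∃ v, ∀ u ∈ nb v, ∀ w ∈ nb v, f u = f w → u = w
  · -- rainbow neighborhood : k ≥ d + 1
    obtain ⟨v, hv⟩ := hrb
    have hvnot : v ∉ nb v := by
      rw [hnb]; exact G.irrefl
    have hinj : Set.InjOn f ↑(insert v (nb v)) := by
      intro u hu w hw huw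
      simp only [Finset.coe_insert, Set.mem_insert_iff, Finset.mem_coe] at hu hw
      rcases hu with rfl | hu <;> rcases hw with rfl | hw
      · rfl
      · exact absurd huw (hprop ((hnb u w).1 hw))
      · exact absurd huw.symm (hprop ((hnb w u).1 hu))
      · exact hv u hu w hw huw
    have hle : (insert v (nb v)).card ≤ k := by
      have := Finset.card_le_card_of_injOn f (fun a _ => Finset.mem_univ (f a)) hinj
      simpa using this
    rw [Finset.card_insert_of_notMem hvnot, hcard v] at hle
    omega
  · push_neg at hrb
    -- every vertex has a repeated colour in its neighborhood
    set t : V → Fin k → ℕ := fun v c => ((nb v).filter (fun u => f u = c)).card with htdef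
    have ht1 : ∀ {v u}, G.Adj v u → 1 ≤ t v (f u) := by
      intro v u h
      refine Finset.card_pos.2 ⟨u, ?_⟩
      simp [htdef, hnb, h]
    have key : ∀ {v u}, G.Adj v u → 2 ≤ t v (f u) → t u (f v) = 1 := by
      intro v u hadj h2
      have h1 : 1 ≤ t u (f v) := ht1 hadj.symm
      by_contra hne
      have h2' : 2 ≤ t u (f v) := by omega
      -- extract two distinct elements from each filter
      obtain ⟨u', hu'mem, hu'ne⟩ : ∃ u', u' ∈ (nb v).filter (fun w => f w = f u) ∧ u' ≠ u := by
        obtain ⟨a, ha, b, hb, hab⟩ := Finset.one_lt_card.1 h2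
        by_cases hau : a = u
        · exact ⟨b, hb, by rw [← hau]; exact fun h => hab h.symm⟩
        · exact ⟨a, ha, hau⟩
      obtain ⟨w, hwmem, hwne⟩ : ∃ w, w ∈ (nb u).filter (fun x => f x = f v) ∧ w ≠ v := by
        obtain ⟨a, ha, b, hb, hab⟩ := Finset.one_lt_card.1 h2'
        by_cases hav : a = v
        · exact ⟨b, hb, by rw [← hav]; exact fun h => hab h.symm⟩
        · exact ⟨a, ha, hav⟩
      simp only [Finset.mem_filter, hnb] at hu'mem hwmem
      -- path u' - v - u - w bicoloured
      refine hstar (a := u') (b := v) (c := u) (d := w) hu'mem.1.symm hadj hwmem.1 hu'ne ?_ ?_ ⟨hu'mem.2, hwmem.2.symm⟩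
      · intro h; subst h
        exact (hprop hadj) (hwmem.2.symm.trans hu'mem.2)
      · exact fun h => hwne h.symm
    set Rset : V → Finset (Fin k) := fun v => Finset.univ.filter (fun c => t v c = 1) with hRdef
    set B : V → Finset V := fun v => (nb v).filter (fun u => ¬ t v (f u) = 1) with hBdef
    set S : V → Finset V := fun v => (nb v).filter (fun u => t v (f u) = 1) with hSdef
    have hSB : ∀ v, (S v).card + (B v).card = d := by
      intro v
      rw [hSdef, hBdef]
      simpa using (Finset.card_filter_add_card_filter_not
        (s := nb v) (fun u => t v (f u) = 1)).trans (hcard v)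
    have hS_eq : ∀ v, (S v).card = (Rset v).card := by
      intro v
      apply Finset.card_bij (fun u _ => f u)
      · intro u hu
        simp only [hSdef, Finset.mem_filter] at hu
        simp [hRdef, hu.2]
      · intro u hu w hw hfeq
        simp only [hSdef, Finset.mem_filter] at hu hw
        have : u ∈ (nb v).filter (fun x => f x = f u) := by simp [hu.1]
        have hw' : w ∈ (nb v).filter (fun x => f x = f u) := by simp [hw.1, hfeq]
        have hone : ((nb v).filter (fun x => f x = f u)).card = 1 := hu.2
        exact Finset.card_le_one.1 (le_of_eq hone) u this w hw'
      · intro c hc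
        simp only [hRdef, Finset.mem_filter, Finset.mem_univ, true_and] at hc
        obtain ⟨u, hu⟩ := Finset.card_eq_one.1 hc
        have hum : u ∈ (nb v).filter (fun x => f x = c) := by rw [hu]; exact Finset.mem_singleton_self u
        simp only [Finset.mem_filter] at hum
        refine ⟨u, ?_, hum.2⟩
        simp only [hSdef, Finset.mem_filter]
        exact ⟨hum.1, by rw [hum.2]; exact hc⟩
    have hk2 : 2 ≤ k := by
      obtain ⟨v⟩ := ‹Nonempty V›
      obtain ⟨u, hu, w, hw, hfeq, hne⟩ := hrb v
      have : ({f v, f u} : Finset (Fin k)).card ≤ k := by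
        simpa using Finset.card_le_univ ({f v, f u} : Finset (Fin k))
      have hne' : f v ≠ f u := hprop ((hnb v u).1 hu)
      rwa [Finset.card_insert_of_notMem (by simpa using hne'), Finset.card_singleton] at this
    have hr_le : ∀ v, (Rset v).card ≤ k - 2 := by
      intro v
      obtain ⟨u, hu, w, hw, hfeq, hne⟩ := hrb v
      have h2 : 2 ≤ t v (f u) := by
        rw [htdef]
        refine Finset.one_lt_card_iff.2 ⟨u, w, ?_, ?_, hne⟩ <;> simp [hu, hw, hfeq]
      have hsub : Rset v ⊆ Finset.univ \ {f v, f u} := by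
        intro c hc
        simp only [hRdef, Finset.mem_filter, Finset.mem_univ, true_and] at hc
        simp only [Finset.mem_sdiff, Finset.mem_univ, true_and, Finset.mem_insert,
          Finset.mem_singleton]
        push_neg
        constructor
        · rintro rfl
          have : t v (f v) = 0 := by
            rw [htdef]
            refine Finset.card_eq_zero.2 (Finset.filter_eq_empty_iff.2 ?_)
            intro x hx
            exact (hprop ((hnb v x).1 hx)).symm
          omega
        · rintro rfl; omega
      have := Finset.card_le_card hsub
      rw [Finset.card_sdiff_of_subset (by simp)] at this
      have hne' : f v ≠ f u := hprop ((hnb v u).1 hu)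
      rwa [Finset.card_insert_of_notMem (by simpa using hne'), Finset.card_singleton,
        Finset.card_univ, Fintype.card_fin] at this
    -- global counting
    have hglobal : (∑ v : V, (B v).card) ≤ ∑ v : V, (Rset v).card := by
      rw [← Finset.card_sigma, ← Finset.card_sigma]
      apply Finset.card_le_card_of_injOn (fun p => ⟨p.2, f p.1⟩)
      · intro p hp
        simp only [Finset.mem_coe, Finset.mem_sigma, Finset.mem_univ, true_and] at hp ⊢
        simp only [hBdef, Finset.mem_filter, hnb] at hp
        have h2 : 2 ≤ t p.1 (f p.2) := by
          have := ht1 hp.1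
          omega
        simp [hRdef, key hp.1 h2]
      · intro p hp q hq heq
        simp only [Finset.coe_sigma, Set.mem_sigma_iff, Finset.mem_coe, Finset.mem_univ,
          true_and] at hp hq
        simp only [Sigma.mk.inj_iff, heq_eq_eq] at heq
        obtain ⟨h1, h2⟩ := heq
        simp only [hBdef, Finset.mem_filter, hnb] at hp hq
        have h2p : 2 ≤ t p.1 (f p.2) := by have := ht1 hp.1; omega
        have hone : t p.2 (f p.1) = 1 := key hp.1 h2p
        have hmem1 : p.1 ∈ (nb p.2).filter (fun x => f x = f p.1) := by
          simp [hnb, hp.1.symm]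
        have hadjq : G.Adj p.2 q.1 := by rw [h1]; exact hq.1.symm
        have hmem2 : q.1 ∈ (nb p.2).filter (fun x => f x = f p.1) := by
          simp [hnb, hadjq, h2.symm]
        have : p.1 = q.1 := Finset.card_le_one.1 (le_of_eq hone) _ hmem1 _ hmem2
        exact Sigma.ext this (heq_of_eq h1)
    have hsum : Fintype.card V * d = (∑ v : V, (S v).card) + ∑ v : V, (B v).card := by
      rw [← Finset.sum_add_distrib]
      rw [Finset.sum_congr rfl (fun v _ => hSB v)]
      simp [mul_comm]
    have hRsum : (∑ v : V, (Rset v).card) ≤ Fintype.card V * (k - 2) := by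
      calc (∑ v : V, (Rset v).card) ≤ ∑ _v : V, (k - 2) := Finset.sum_le_sum (fun v _ => hr_le v)
      _ = Fintype.card V * (k - 2) := by simp [mul_comm]
    have hSsum : (∑ v : V, (S v).card) = ∑ v : V, (Rset v).card :=
      Finset.sum_congr rfl (fun v _ => hS_eq v)
    have hfinal : Fintype.card V * d ≤ Fintype.card V * (2 * (k - 2)) := by
      calc Fintype.card V * d = (∑ v : V, (S v).card) + ∑ v : V, (B v).card := hsum
      _ ≤ (∑ v : V, (Rset v).card) + ∑ v : V, (Rset v).card := by
          rw [hSsum]; exact Nat.add_le_add_left hglobal _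
      _ ≤ Fintype.card V * (k - 2) + Fintype.card V * (k - 2) := Nat.add_le_add hRsum hRsum
      _ = Fintype.card V * (2 * (k - 2)) := by ring
    have hn : 0 < Fintype.card V := Fintype.card_pos
    have : d ≤ 2 * (k - 2) := Nat.le_of_mul_le_mul_left hfinal hn
    omega



/-- Even-degree extremal graph: (a,b) ~ (b,c) for c ≠ a. -/
def EG (q : ℕ) [NeZero q] : SimpleGraph (Vq q) where
  Adj u v := (u.1.2 = v.1.1 ∧ u.1.1 ≠ v.1.2) ∨ (v.1.2 = u.1.1 ∧ v.1.1 ≠ u.1.2)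
  symm := ⟨fun u v h => h.symm⟩
  loopless := ⟨fun u h => by
    rcases h with ⟨h1, _⟩ | ⟨h1, _⟩ <;> exact u.2 h1.symm⟩

lemma EG_star (q : ℕ) [NeZero q] :
    IsStarColoring (EG q) (fun v : Vq q => v.1.1) := by
  constructor
  · rintro u v (⟨h1, h2⟩ | ⟨h1, h2⟩) h
    · exact u.2 (h.trans h1.symm)
    · exact v.2 (h.symm.trans h1.symm)
  · rintro a b c d hab hbc hcd hac had hbd ⟨h1, h2⟩
    simp only at h1 h2
    rcases hab with ⟨e1, e2⟩ | ⟨e1, e2⟩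
    · rcases hbc with ⟨e3, e4⟩ | ⟨e3, e4⟩
      · exact e2 (h1.trans e3.symm)
      · exact hac (Subtype.ext (Prod.ext h1 (e1.trans e3.symm)))
    · rcases hbc with ⟨e3, e4⟩ | ⟨e3, e4⟩
      · rcases hcd with ⟨e5, e6⟩ | ⟨e5, e6⟩
        · exact e4 (h2.trans e5.symm)
        · exact hbd (Subtype.ext (Prod.ext h2 (e3.trans e5.symm)))
      · exact e4 (h1.symm.trans e1.symm)

set_option linter.unusedSectionVars false in
lemma ncard_ne_two (q : ℕ) [NeZero q] (b c : ZMod q) (hbc : b ≠ c) :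
    {e : ZMod q | e ≠ b ∧ e ≠ c}.ncard = q - 2 := by
  have : {e : ZMod q | e ≠ b ∧ e ≠ c} = Set.univ \ {b, c} := by
    ext e; simp [not_or]
  rw [this, Set.ncard_diff (Set.subset_univ _), Set.ncard_univ, Nat.card_zmod,
    Set.ncard_pair hbc]

lemma EG_regular (q : ℕ) [NeZero q] (u : Vq q) :
    ((EG q).neighborSet u).ncard = 2 * q - 4 := by
  obtain ⟨⟨b, c⟩, hbc⟩ := u
  have hbc' : b ≠ c := hbc
  set A1 : Set (Vq q) := {v | c = v.1.1 ∧ b ≠ v.1.2} with hA1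
  set A2 : Set (Vq q) := {v | v.1.2 = b ∧ v.1.1 ≠ c} with hA2
  have hns : (EG q).neighborSet ⟨(b, c), hbc⟩ = A1 ∪ A2 := rfl
  have hd : Disjoint A1 A2 := by
    rw [Set.disjoint_left]
    rintro v ⟨hv1, hv2⟩ ⟨hw1, hw2⟩
    exact hw2 hv1.symm
  have hc1 : A1.ncard = q - 2 := by
    have hinj : Set.InjOn (fun v : Vq q => v.1.2) A1 := by
      rintro v ⟨hv1, hv2⟩ w ⟨hw1, hw2⟩ h
      exact Subtype.ext (Prod.ext (hv1.symm.trans hw1) h)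
    have himg : (fun v : Vq q => v.1.2) '' A1 = {e : ZMod q | e ≠ b ∧ e ≠ c} := by
      ext e
      constructor
      · rintro ⟨v, ⟨hv1, hv2⟩, rfl⟩
        exact ⟨fun h => hv2 h.symm, fun h => v.2 (hv1.symm.trans h.symm)⟩
      · rintro ⟨he1, he2⟩
        exact ⟨⟨(c, e), fun h => he2 h.symm⟩, ⟨rfl, fun h => he1 h.symm⟩, rfl⟩
    rw [← Set.ncard_image_of_injOn hinj, himg, ncard_ne_two q b c hbc']
  have hc2 : A2.ncard = q - 2 := by
    have hinj : Set.InjOn (fun v : Vq q => v.1.1) A2 := by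
      rintro v ⟨hv1, hv2⟩ w ⟨hw1, hw2⟩ h
      exact Subtype.ext (Prod.ext h (hv1.trans hw1.symm))
    have himg : (fun v : Vq q => v.1.1) '' A2 = {e : ZMod q | e ≠ b ∧ e ≠ c} := by
      ext e
      constructor
      · rintro ⟨v, ⟨hv1, hv2⟩, rfl⟩
        exact ⟨fun h => v.2 (h.trans hv1.symm), hv2⟩
      · rintro ⟨he1, he2⟩
        exact ⟨⟨(e, b), he1⟩, ⟨rfl, he2⟩, rfl⟩
    rw [← Set.ncard_image_of_injOn hinj, himg, ncard_ne_two q b c hbc']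
  rw [hns, Set.ncard_union_eq hd, hc1, hc2]
  omega



section Odd
variable {q : ℕ} [NeZero q]

set_option linter.unusedSectionVars false

lemma zmod_one_ne_zero (hq : 3 ≤ q) : (1 : ZMod q) ≠ 0 := by
  intro h
  have : ((1 : ℕ) : ZMod q) = 0 := by exact_mod_cast h
  have := (ZMod.natCast_eq_zero_iff 1 q).1 this
  have := Nat.le_of_dvd (by norm_num) this
  omega

lemma zmod_two_ne_zero (hq : 3 ≤ q) : (2 : ZMod q) ≠ 0 := by
  intro h
  have : ((2 : ℕ) : ZMod q) = 0 := by exact_mod_cast h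
  have := (ZMod.natCast_eq_zero_iff 2 q).1 this
  have := Nat.le_of_dvd (by norm_num) this
  omega

/-- successor of `a` skipping `b` -/
def mu (q : ℕ) (a b : ZMod q) : ZMod q := if a + 1 = b then a + 2 else a + 1

/-- inverse of `mu · b` -/
def nu (q : ℕ) (b c : ZMod q) : ZMod q := if c = b + 1 then b - 1 else c - 1

lemma mu_ne_left (hq : 3 ≤ q) (a b : ZMod q) : mu q a b ≠ a := by
  rw [mu]; split_ifs with h <;> intro he
  · exact zmod_two_ne_zero hq (by linear_combination he)
  · exact zmod_one_ne_zero hq (by linear_combination he)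

lemma mu_ne_right (hq : 3 ≤ q) (a b : ZMod q) : mu q a b ≠ b := by
  rw [mu]; split_ifs with h <;> intro he
  · exact zmod_one_ne_zero hq (by linear_combination he - h)
  · exact h he

lemma mu_inj (hq : 3 ≤ q) {a a' b : ZMod q} (ha : a ≠ b) (ha' : a' ≠ b)
    (h : mu q a b = mu q a' b) : a = a' := by
  rw [mu, mu] at h
  split_ifs at h with h1 h2 h2
  · linear_combination h
  · exact absurd (by linear_combination h1 - h : a' = b) ha'
  · exact absurd (by linear_combination h + h2 : a = b) ha
  · linear_combination h

lemma nu_ne_left (hq : 3 ≤ q) (b c : ZMod q) : nu q b c ≠ b := by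
  rw [nu]; split_ifs with h <;> intro he
  · exact zmod_one_ne_zero hq (by linear_combination -he)
  · exact h (by linear_combination he)

lemma nu_ne_right (hq : 3 ≤ q) {b c : ZMod q} (hcb : c ≠ b) : nu q b c ≠ c := by
  rw [nu]; split_ifs with h <;> intro he
  · exact zmod_two_ne_zero hq (by linear_combination -he - h)
  · exact zmod_one_ne_zero hq (by linear_combination -he)

lemma mu_nu (hq : 3 ≤ q) {b c : ZMod q} (hcb : c ≠ b) : mu q (nu q b c) b = c := by
  rw [nu]; split_ifs with h
  · rw [mu, if_pos (by ring)]; linear_combination -h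
  · rw [mu, if_neg (fun he => hcb (by linear_combination he))]; ring

lemma mu_eq_iff (hq : 3 ≤ q) {x b c : ZMod q} (hx : x ≠ b) (hcb : c ≠ b) :
    mu q x b = c ↔ x = nu q b c := by
  constructor
  · intro h
    exact mu_inj hq hx (nu_ne_left hq b c) (h.trans (mu_nu hq hcb).symm)
  · rintro rfl
    exact mu_nu hq hcb

end Odd

section OddGraph
variable (q : ℕ) [NeZero q]

/-- star edge: `u` is a centre, `v` a leaf -/
def OS (u v : Vq q) : Prop :=
  u.1.2 = v.1.1 ∧ v.1.2 ≠ u.1.1 ∧ v.1.2 ≠ mu q u.1.1 u.1.2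

/-- matching edge -/
def OM (u v : Vq q) : Prop :=
  u.1.1 ≠ v.1.1 ∧ u.1.2 = mu q v.1.1 u.1.1 ∧ v.1.2 = mu q u.1.1 v.1.1

def OG : SimpleGraph (Vq q) where
  Adj u v := OS q u v ∨ OS q v u ∨ OM q u v
  symm := by
    constructor
    rintro u v (h | h | h)
    · exact Or.inr (Or.inl h)
    · exact Or.inl h
    · exact Or.inr (Or.inr ⟨h.1.symm, h.2.2, h.2.1⟩)
  loopless := by
    constructor
    rintro u (h | h | h)
    · exact u.2 h.1.symm
    · exact u.2 h.1.symm
    · exact h.1 rfl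

variable {q}

lemma OG_star (hq : 3 ≤ q) :
    IsStarColoring (OG q) (fun v : Vq q => v.1.1) := by
  constructor
  · rintro u v (h | h | h) he
    · exact u.2 (he.trans h.1.symm)
    · exact v.2 (he.symm.trans h.1.symm)
    · exact h.1 he
  · rintro a b c d hab hbc hcd hac had hbd ⟨h1, h2⟩
    simp only at h1 h2
    rcases hab with ⟨e1, e2, e3⟩ | ⟨e1, e2, e3⟩ | ⟨e1, e2, e3⟩
    · rcases hbc with ⟨f1, f2, f3⟩ | ⟨f1, f2, f3⟩ | ⟨f1, f2, f3⟩
      · -- OS a b, OS b c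
        exact e2 (f1.trans h1.symm)
      · -- OS a b, OS c b
        exact hac (Subtype.ext (Prod.ext h1 (e1.trans f1.symm)))
      · -- OS a b, OM b c
        exact e3 (f2.trans (by rw [h1, ← e1]))
    · rcases hbc with ⟨f1, f2, f3⟩ | ⟨f1, f2, f3⟩ | ⟨f1, f2, f3⟩
      · -- OS b a, OS b c : need third edge
        rcases hcd with ⟨g1, g2, g3⟩ | ⟨g1, g2, g3⟩ | ⟨g1, g2, g3⟩
        · -- OS c d
          exact f2 (g1.trans h2.symm)
        · -- OS d c
          exact hbd (Subtype.ext (Prod.ext h2 (f1.trans g1.symm)))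
        · -- OM c d
          exact f3 (g2.trans (by rw [← h2, ← f1]))
      · -- OS b a, OS c b
        exact f2 (e1.trans h1)
      · -- OS b a, OM b c
        exact mu_ne_left hq c.1.1 b.1.1 ((f2.symm.trans e1).trans h1)
    · rcases hbc with ⟨f1, f2, f3⟩ | ⟨f1, f2, f3⟩ | ⟨f1, f2, f3⟩
      · -- OM a b, OS b c
        exact mu_ne_left hq a.1.1 b.1.1 (e3.symm.trans (f1.trans h1.symm))
      · -- OM a b, OS c b
        exact f3 (e3.trans (by rw [h1, ← f1]))
      · -- OM a b, OM b c
        refine hac (Subtype.ext (Prod.ext h1 ?_))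
        rw [e2, f3, h1]
end OddGraph

section OddReg
variable {q : ℕ} [NeZero q]

lemma ncard_ne_three (hq : 3 ≤ q) {x y z : ZMod q} (hxy : x ≠ y) (hxz : x ≠ z) (hyz : y ≠ z) :
    {e : ZMod q | e ≠ x ∧ e ≠ y ∧ e ≠ z}.ncard = q - 3 := by
  have hset : {e : ZMod q | e ≠ x ∧ e ≠ y ∧ e ≠ z} = Set.univ \ {x, y, z} := by
    ext e; simp [not_or]
  have h3 : ({x, y, z} : Set (ZMod q)).ncard = 3 := by
    rw [Set.ncard_insert_of_notMem (by simp [hxy, hxz]), Set.ncard_pair hyz]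
  rw [hset, Set.ncard_diff (Set.subset_univ _), Set.ncard_univ, Nat.card_zmod, h3]

lemma OG_regular (hq : 3 ≤ q) (u : Vq q) :
    ((OG q).neighborSet u).ncard = 2 * q - 5 := by
  obtain ⟨⟨b, c⟩, hbc⟩ := u
  have hbc' : b ≠ c := hbc
  have hcb : c ≠ b := hbc'.symm
  set x0 : ZMod q := nu q b c with hx0
  set y0 : ZMod q := mu q b x0 with hy0
  have hx0b : x0 ≠ b := nu_ne_left hq b c
  have hx0c : x0 ≠ c := nu_ne_right hq hcb
  have hmux0 : mu q x0 b = c := mu_nu hq hcb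
  have hy0x0 : y0 ≠ x0 := mu_ne_right hq b x0
  have hy0b : y0 ≠ b := mu_ne_left hq b x0
  set m : Vq q := ⟨(x0, y0), fun h => hy0x0 h.symm⟩ with hm
  set u : Vq q := ⟨(b, c), hbc⟩ with hu
  set A1 : Set (Vq q) := {v | OS q u v} with hA1
  set A2 : Set (Vq q) := {v | OS q v u} with hA2
  set A3 : Set (Vq q) := {v | OM q u v} with hA3
  have hns : (OG q).neighborSet u = A1 ∪ (A2 ∪ A3) := by
    ext v
    simp only [SimpleGraph.mem_neighborSet, OG, hA1, hA2, hA3, Set.mem_union, Set.mem_setOf_eq]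
  have hA3m : A3 = {m} := by
    ext v
    simp only [hA3, Set.mem_setOf_eq, Set.mem_singleton_iff]
    constructor
    · rintro ⟨g1, g2, g3⟩
      -- g1 : b ≠ v.1.1, g2 : c = mu q v.1.1 b, g3 : v.1.2 = mu q b v.1.1
      have hv1 : v.1.1 = x0 := (mu_eq_iff hq (fun h => g1 h.symm) hcb).1 g2.symm
      refine Subtype.ext (Prod.ext hv1 ?_)
      rw [g3, hv1]
    · rintro rfl
      exact ⟨fun h => hx0b h.symm, hmux0.symm, rfl⟩
  have hc1 : A1.ncard = q - 3 := by
    have hinj : Set.InjOn (fun v : Vq q => v.1.2) A1 := by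
      rintro v ⟨hv1, _⟩ w ⟨hw1, _⟩ h
      exact Subtype.ext (Prod.ext (hv1.symm.trans hw1) h)
    have himg : (fun v : Vq q => v.1.2) '' A1
        = {e : ZMod q | e ≠ b ∧ e ≠ c ∧ e ≠ mu q b c} := by
      ext e
      constructor
      · rintro ⟨v, ⟨hv1, hv2, hv3⟩, rfl⟩
        exact ⟨hv2, fun h => v.2 (hv1.symm.trans h.symm), hv3⟩
      · rintro ⟨he1, he2, he3⟩
        exact ⟨⟨(c, e), fun h => he2 h.symm⟩, ⟨rfl, he1, he3⟩, rfl⟩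
    rw [← Set.ncard_image_of_injOn hinj, himg]
    exact ncard_ne_three hq hbc' (mu_ne_left hq b c).symm (mu_ne_right hq b c).symm
  have hc2 : A2.ncard = q - 3 := by
    have hinj : Set.InjOn (fun v : Vq q => v.1.1) A2 := by
      rintro v ⟨hv1, _⟩ w ⟨hw1, _⟩ h
      exact Subtype.ext (Prod.ext h (hv1.trans hw1.symm))
    have himg : (fun v : Vq q => v.1.1) '' A2
        = {e : ZMod q | e ≠ b ∧ e ≠ c ∧ e ≠ x0} := by
      ext e
      constructor
      · rintro ⟨v, ⟨hv1, hv2, hv3⟩, rfl⟩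
        refine ⟨fun h => v.2 (h.trans hv1.symm), fun h => hv2 h.symm, fun h => ?_⟩
        have h' : (v : ZMod q × ZMod q).1 = x0 := h
        exact hv3 (by rw [h', hv1]; exact hmux0.symm)
      · rintro ⟨he1, he2, he3⟩
        refine ⟨⟨(e, b), he1⟩, ⟨rfl, fun h => he2 h.symm, fun h => ?_⟩, rfl⟩
        exact he3 ((mu_eq_iff hq he1 hcb).1 h.symm)
    rw [← Set.ncard_image_of_injOn hinj, himg]
    exact ncard_ne_three hq hbc' hx0b.symm hx0c.symm
  have hd12 : Disjoint A1 A2 := by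
    rw [Set.disjoint_left]
    rintro v ⟨hv1, _, _⟩ ⟨hw1, hw2, _⟩
    exact hw2 hv1
  have hd13 : Disjoint A1 A3 := by
    rw [hA3m, Set.disjoint_right]
    rintro v hv ⟨hv1, _, _⟩
    rw [hv] at hv1
    exact hx0c hv1.symm
  have hd23 : Disjoint A2 A3 := by
    rw [hA3m, Set.disjoint_right]
    rintro v hv ⟨hv1, _, _⟩
    rw [hv] at hv1
    exact hy0b hv1
  rw [hns, Set.ncard_union_eq (by
      rw [Set.disjoint_union_right]; exact ⟨hd12, hd13⟩),
    Set.ncard_union_eq hd23, hc1, hc2, hA3m, Set.ncard_singleton]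
  omega
end OddReg


lemma isStarColoring_comp {V α β : Type*} {G : SimpleGraph V} {g : V → α} {ι : α → β}
    (hι : Function.Injective ι) (hg : IsStarColoring G g) : IsStarColoring G (ι ∘ g) := by
  obtain ⟨h1, h2⟩ := hg
  exact ⟨fun u v huv h => h1 huv (hι h),
    fun a b c d hab hbc hcd hac had hbd h => h2 hab hbc hcd hac had hbd ⟨hι h.1, hι h.2⟩⟩

/-- For every d ≥ 2 there is a d-regular graph whose star chromatic number is
exactly ⌈(d+4)/2⌉ (= (d+5)/2 in natural division). -/
theorem stmt16 (d : ℕ) (hd : 2 ≤ d) :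
    ∃ (V : Type) (_ : Fintype V) (_ : Nonempty V) (G : SimpleGraph V),
      (∀ v : V, (G.neighborSet v).ncard = d) ∧
      (∃ f : V → Fin ((d + 5) / 2), IsStarColoring G f) ∧
      ∀ k : ℕ, (∃ f : V → Fin k, IsStarColoring G f) → (d + 5) / 2 ≤ k := by
  set q := (d + 5) / 2 with hqdef
  have hq3 : 3 ≤ q := by omega
  haveI : NeZero q := ⟨by omega⟩
  haveI hne : Nonempty (Vq q) :=
    ⟨⟨(0, 1), fun h => zmod_one_ne_zero hq3 h.symm⟩⟩
  have hι : Function.Injective (fun c : ZMod q => (⟨c.val, ZMod.val_lt c⟩ : Fin q)) := by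
    intro x y h
    exact ZMod.val_injective q (by simpa using congrArg Fin.val h)
  rcases Nat.even_or_odd d with he | ho
  · obtain ⟨m, hm⟩ := he
    have hdq : 2 * q - 4 = d := by omega
    refine ⟨Vq q, inferInstance, hne, EG q, ?_, ?_, ?_⟩
    · intro v; rw [EG_regular q v, hdq]
    · exact ⟨_, isStarColoring_comp hι (EG_star q)⟩
    · rintro k ⟨f, hf⟩
      exact star_lower_bound (EG q) hd
        (fun v => by rw [EG_regular q v, hdq]) hf
  · obtain ⟨m, hm⟩ := ho
    have hdq : 2 * q - 5 = d := by omega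
    refine ⟨Vq q, inferInstance, hne, OG q, ?_, ?_, ?_⟩
    · intro v; rw [OG_regular hq3 v, hdq]
    · exact ⟨_, isStarColoring_comp hι (OG_star hq3)⟩
    · rintro k ⟨f, hf⟩
      exact star_lower_bound (OG q) hd
        (fun v => by rw [OG_regular hq3 v, hdq]) hf
end

section
/- Let p ≥ 2 and let G be a 2p-regular graph. Then G is (p+2)-star colourable if and only if the vertex set of G can be partitioned into (p+1)(p+2) sets V_i^j, indexed by pairs i,j ∈ {0,...,p+1} with i ≠ j, such that for all i ≠ j every vertex in V_i^j has exactly p neighbours in the union of the sets V_j^k over k ∉ {i,j}, exactly one neighbour in V_k^i for each k ∉ {i,j}, and no other neighbours. -/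
open Finset

namespace SimpleGraph

variable {V α : Type*} {G : SimpleGraph V}

theorem ncard_neighborSet_eq_degree [Fintype V] [DecidableRel G.Adj] (v : V) :
    (G.neighborSet v).ncard = G.degree v := by
  rw [Set.ncard_eq_toFinset_card', ← card_neighborFinset_eq_degree]
  rfl

/-- Summing `deg v + #{both directions} = #out + #in` over `V` gives
`2p|V| + Σ #{both directions} = 2 Σ #out ≤ 2p|V|`, so all the inequalities are equalities. -/
theorem IsRegularOfDegree.card_filter_eq_and_asymm [Fintype V] [DecidableEq V]
    [DecidableRel G.Adj] {p : ℕ} (hG : G.IsRegularOfDegree (2 * p)) (R : V → V → Prop)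
    [DecidableRel R] (hcover : ∀ ⦃v u⦄, G.Adj v u → R v u ∨ R u v)
    (hle : ∀ v, #{u ∈ G.neighborFinset v | R v u} ≤ p) :
    (∀ v, #{u ∈ G.neighborFinset v | R v u} = p) ∧ ∀ ⦃v u⦄, G.Adj v u → R v u → ¬R u v := by
  set out := fun v => #{u ∈ G.neighborFinset v | R v u}
  set inn := fun v => #{u ∈ G.neighborFinset v | R u v}
  set both := fun v => #{u ∈ G.neighborFinset v | R v u ∧ R u v}
  have hdeg v : 2 * p + both v = out v + inn v := by
    have hcov : {u ∈ G.neighborFinset v | R v u ∨ R u v} = G.neighborFinset v :=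
      filter_true_of_mem fun u hu => hcover ((mem_neighborFinset G v u).mp hu)
    rw [← card_union_add_card_inter, ← filter_or, ← filter_and, hcov,
      card_neighborFinset_eq_degree, hG v]
  have hsum : ∑ v, inn v = ∑ v, out v := by
    simp only [inn, out, neighborFinset_eq_filter, filter_filter, card_filter]
    rw [sum_comm]
    simp only [G.adj_comm]
  have htotal : 2 * ∑ _v : V, p + ∑ v, both v = ∑ v, out v + ∑ v, inn v := by
    rw [mul_sum, ← sum_add_distrib, ← sum_add_distrib]; exact sum_congr rfl fun v _ => hdeg v
  have hout_le : ∑ v, out v ≤ ∑ _v : V, p := sum_le_sum fun v _ => hle v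
  have hboth : ∑ v, both v = 0 := by omega
  have hout : ∑ v, out v = ∑ _v : V, p := by omega
  refine ⟨fun v => (sum_eq_sum_iff_of_le fun v _ => hle v).mp hout v (mem_univ v), ?_⟩
  intro v u hvu hR hR'
  have hmem : u ∈ {u ∈ G.neighborFinset v | R v u ∧ R u v} :=
    mem_filter.mpr ⟨(mem_neighborFinset G v u).mpr hvu, hR, hR'⟩
  rw [card_eq_zero.mp (sum_eq_zero_iff.mp hboth v (mem_univ v))] at hmem
  exact notMem_empty u hmem

variable (G) in
/-- In a star colouring, `v` is then a leaf of the bicoloured star containing the edge `vu`. -/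
def IsLoneNeighbor (f : V → α) (v u : V) : Prop :=
  G.Adj v u ∧ ∀ ⦃w⦄, G.Adj v w → f w = f u → w = u

theorem IsLoneNeighbor.adj {f : V → α} {v u : V} (h : G.IsLoneNeighbor f v u) : G.Adj v u := h.1

theorem IsLoneNeighbor.eq_of_adj {f : V → α} {v u w : V} (h : G.IsLoneNeighbor f v u)
    (hw : G.Adj v w) (hf : f w = f u) : w = u := h.2 hw hf

theorem isLoneNeighbor_or_of_isStarColoring {f : V → α} (hf : IsStarColoring G f) {v u : V}
    (h : G.Adj v u) : G.IsLoneNeighbor f v u ∨ G.IsLoneNeighbor f u v := by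
  by_contra! hnot
  obtain ⟨w, hvw, hfw, hwu⟩ : ∃ w, G.Adj v w ∧ f w = f u ∧ w ≠ u := by
    simpa [IsLoneNeighbor, h] using hnot.1
  obtain ⟨x, hux, hfx, hxv⟩ : ∃ x, G.Adj u x ∧ f x = f v ∧ x ≠ v := by
    simpa [IsLoneNeighbor, h.symm] using hnot.2
  refine hf.2 hux.symm h.symm hvw hxv (fun hxw => hf.1 h ?_) hwu.symm ⟨hfx, hfw.symm⟩
  rw [← hfx, ← hfw, hxw]

section LoneColors

open scoped Classical

variable [Fintype V] [DecidableEq α] {f : V → α} {v : V}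

variable (G) in
noncomputable def loneColors (f : V → α) (v : V) : Finset α :=
  {u ∈ G.neighborFinset v | G.IsLoneNeighbor f v u}.image f

theorem mem_loneColors {k : α} :
    k ∈ G.loneColors f v ↔ ∃ u, G.IsLoneNeighbor f v u ∧ f u = k := by
  simp only [loneColors, mem_image, mem_filter, mem_neighborFinset]
  exact ⟨fun ⟨u, ⟨_, hu⟩, hk⟩ => ⟨u, hu, hk⟩, fun ⟨u, hu, hk⟩ => ⟨u, ⟨hu.adj, hu⟩, hk⟩⟩

theorem card_loneColors :
    #(G.loneColors f v) = #{u ∈ G.neighborFinset v | G.IsLoneNeighbor f v u} := by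
  refine card_image_of_injOn fun u₁ hu₁ u₂ hu₂ hf => ?_
  have hlone₁ := (mem_filter.mp (mem_coe.mp hu₁)).2
  exact (hlone₁.eq_of_adj (mem_filter.mp (mem_coe.mp hu₂)).2.adj hf.symm).symm

theorem isLoneNeighbor_of_mem_loneColors {u : V} (h : G.Adj v u) (hu : f u ∈ G.loneColors f v) :
    G.IsLoneNeighbor f v u := by
  obtain ⟨w, hw, hfw⟩ := mem_loneColors.mp hu
  rwa [hw.eq_of_adj h hfw.symm]

theorem loneColors_subset_erase [Fintype α] (hf : ∀ ⦃u w⦄, G.Adj u w → f u ≠ f w) :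
    G.loneColors f v ⊆ univ.erase (f v) := fun k hk => by
  obtain ⟨u, hu, rfl⟩ := mem_loneColors.mp hk
  exact mem_erase.mpr ⟨hf hu.adj.symm, mem_univ _⟩

/-- Otherwise every colour but `f v` is lone at `v`, so every neighbour of `v` is lone and
`G.degree v < Fintype.card α`. -/
theorem card_loneColors_add_one_lt [Fintype α] (hf : ∀ ⦃u w⦄, G.Adj u w → f u ≠ f w)
    (hdeg : Fintype.card α ≤ G.degree v) : #(G.loneColors f v) + 1 < Fintype.card α := by
  have hsub := loneColors_subset_erase (v := v) hf
  have hle := card_le_card hsub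
  rw [card_erase_of_mem (mem_univ _), card_univ] at hle
  by_contra! hge
  have hfull : G.loneColors f v = univ.erase (f v) :=
    eq_of_subset_of_card_le hsub (by rw [card_erase_of_mem (mem_univ _), card_univ]; omega)
  have hall : G.neighborFinset v ⊆ {u ∈ G.neighborFinset v | G.IsLoneNeighbor f v u} := by
    intro u hu
    have hadj := (mem_neighborFinset G v u).mp hu
    refine mem_filter.mpr ⟨hu, isLoneNeighbor_of_mem_loneColors hadj ?_⟩
    rw [hfull]
    exact mem_erase.mpr ⟨hf hadj.symm, mem_univ _⟩
  have := card_le_card hall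
  rw [card_neighborFinset_eq_degree, ← card_loneColors] at this
  have : 0 < Fintype.card α := Fintype.card_pos_iff.mpr ⟨f v⟩
  omega

theorem exists_forall_mem_loneColors_iff [Fintype α] (hf : ∀ ⦃u w⦄, G.Adj u w → f u ≠ f w)
    (hcard : #(G.loneColors f v) + 2 = Fintype.card α) :
    ∃ s, s ≠ f v ∧ ∀ k, k ∈ G.loneColors f v ↔ k ≠ f v ∧ k ≠ s := by
  have hsub := loneColors_subset_erase (v := v) hf
  obtain ⟨s, hs⟩ : ∃ s, univ.erase (f v) \ G.loneColors f v = {s} := by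
    rw [← card_eq_one, card_sdiff_of_subset hsub, card_erase_of_mem (mem_univ _), card_univ]
    omega
  have hmem k :
      k ∈ G.loneColors f v ↔ k ∈ univ.erase (f v) ∧ k ∉ univ.erase (f v) \ G.loneColors f v :=
    ⟨fun hk => ⟨hsub hk, fun h => (mem_sdiff.mp h).2 hk⟩,
      fun ⟨hk, hk'⟩ => by_contra fun h => hk' (mem_sdiff.mpr ⟨hk, h⟩)⟩
  have hsv : s ∈ univ.erase (f v) := (mem_sdiff.mp (hs ▸ mem_singleton_self s)).1
  refine ⟨s, (mem_erase.mp hsv).1, fun k => ?_⟩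
  simp only [hmem, hs, mem_erase, mem_singleton, mem_univ, and_true]

theorem color_eq_iff_not_isLoneNeighbor (hf : ∀ ⦃u w⦄, G.Adj u w → f u ≠ f w) {s : α}
    (hs : ∀ k, k ∈ G.loneColors f v ↔ k ≠ f v ∧ k ≠ s) {u : V} (h : G.Adj v u) :
    f u = s ↔ ¬G.IsLoneNeighbor f v u := by
  refine ⟨fun hu hlone => ((hs _).mp (mem_loneColors.mpr ⟨u, hlone, rfl⟩)).2 hu, fun hlone => ?_⟩
  by_contra hne
  exact hlone (isLoneNeighbor_of_mem_loneColors h ((hs _).mpr ⟨hf h.symm, hne⟩))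

theorem IsRegularOfDegree.exists_partition_of_isStarColoring [Fintype α] {p : ℕ} (hp : 2 ≤ p)
    (hα : Fintype.card α = p + 2) (hG : G.IsRegularOfDegree (2 * p)) (hf : IsStarColoring G f) :
    ∃ s : V → α, (∀ v, f v ≠ s v) ∧ ∀ v,
      ({u | G.Adj v u ∧ f u = s v ∧ s u ≠ f v}.ncard = p) ∧
      (∀ k, k ≠ f v → k ≠ s v → {u | G.Adj v u ∧ f u = k ∧ s u = f v}.ncard = 1) ∧
      (∀ u, G.Adj v u → (f u = s v ∧ s u ≠ f v) ∨ (f u ≠ s v ∧ s u = f v)) := by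
  have hproper : ∀ ⦃u w⦄, G.Adj u w → f u ≠ f w := hf.1
  have hle v : #{u ∈ G.neighborFinset v | G.IsLoneNeighbor f v u} ≤ p := by
    have := card_loneColors_add_one_lt hproper (v := v) (by rw [hα, hG v]; omega)
    rw [card_loneColors] at this
    omega
  obtain ⟨hcard, hasymm⟩ := hG.card_filter_eq_and_asymm _
    (fun _ _ h => isLoneNeighbor_or_of_isStarColoring hf h) hle
  -- `v` is the centre of its `{f v, s v}`-coloured star, whose `p` leaves are the neighbours
  -- of `v` that are not lone.
  choose s hsf hs using fun v => exists_forall_mem_loneColors_iff hproper (v := v)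
    (by rw [card_loneColors, hcard, hα])
  have hfs {v u} (h : G.Adj v u) : f u = s v ↔ ¬G.IsLoneNeighbor f v u :=
    color_eq_iff_not_isLoneNeighbor hproper (hs v) h
  have hsf' {v u} (h : G.Adj v u) : s u = f v ↔ G.IsLoneNeighbor f v u := by
    rw [eq_comm, hfs h.symm, not_iff_comm]
    exact ⟨(isLoneNeighbor_or_of_isStarColoring hf h).resolve_left, fun h' => hasymm h.symm h'⟩
  refine ⟨s, fun v => (hsf v).symm, fun v => ⟨?_, fun k hkf hks => ?_, fun u h => ?_⟩⟩
  · have hset : {u | G.Adj v u ∧ f u = s v ∧ s u ≠ f v} =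
        ↑{u ∈ G.neighborFinset v | ¬G.IsLoneNeighbor f v u} := by
      ext u
      simp only [Set.mem_ofPred_eq, coe_filter, mem_neighborFinset]
      refine ⟨fun ⟨h, _, hsu⟩ => ⟨h, fun hl => hsu ((hsf' h).mpr hl)⟩, fun ⟨h, hl⟩ => ?_⟩
      exact ⟨h, (hfs h).mpr hl, fun e => hl ((hsf' h).mp e)⟩
    have hsplit := card_filter_add_card_filter_not (s := G.neighborFinset v)
      (p := G.IsLoneNeighbor f v)
    rw [hset, Set.ncard_coe_finset]
    rw [hcard, card_neighborFinset_eq_degree, hG v] at hsplit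
    omega
  · obtain ⟨u₀, hu₀, rfl⟩ := mem_loneColors.mp ((hs v k).mpr ⟨hkf, hks⟩)
    refine Set.ncard_eq_one.mpr ⟨u₀, Set.ext fun u => ⟨fun ⟨h, hc, _⟩ => hu₀.eq_of_adj h hc, ?_⟩⟩
    rintro rfl
    exact ⟨hu₀.adj, rfl, (hsf' hu₀.adj).mpr hu₀⟩
  · by_cases hl : G.IsLoneNeighbor f v u
    · exact Or.inr ⟨fun e => (hfs h).mp e hl, (hsf' h).mpr hl⟩
    · exact Or.inl ⟨(hfs h).mpr hl, fun e => hl ((hsf' h).mp e)⟩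

end LoneColors

section Partition

variable {c s : V → α}

theorem isStarColoring_of_partition (hcs : ∀ v, c v ≠ s v)
    (hone : ∀ v k, k ≠ c v → k ≠ s v → {u | G.Adj v u ∧ c u = k ∧ s u = c v}.Subsingleton)
    (hnbr : ∀ v u, G.Adj v u → (c u = s v ∧ s u ≠ c v) ∨ (c u ≠ s v ∧ s u = c v)) :
    IsStarColoring G c := by
  have hsc {v u} (h : G.Adj v u) (hne : c u ≠ s v) : s u = c v :=
    ((hnbr v u h).resolve_left fun h' => hne h'.1).2
  have hproper {v u} (h : G.Adj v u) : c v ≠ c u := fun e =>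
    (hnbr v u h).elim (fun h' => hcs v (e.trans h'.1)) fun h' => hcs u (h'.2.trans e).symm
  have heq {b a w} (ha : G.Adj b a) (hw : G.Adj b w) (hc : c a = c w) (hne : c w ≠ s b) :
      a = w :=
    hone b (c w) (hproper hw).symm hne ⟨ha, hc, hsc ha (hc ▸ hne)⟩ ⟨hw, rfl, hsc hw hne⟩
  refine ⟨fun u v h => hproper h, ?_⟩
  rintro a b w d hab hbw hwd haw - hbd ⟨hac, hbd'⟩
  rcases hnbr b w hbw with ⟨-, hsw⟩ | ⟨hws, -⟩
  · exact hbd (heq hbw.symm hwd hbd' (hbd' ▸ Ne.symm hsw))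
  · exact haw (heq hab.symm hbw hac hws)

end Partition

end SimpleGraph

/-- Characterization: a 2p-regular graph (p ≥ 2) is (p+2)-star colourable iff
its vertex set can be partitioned into sets V_i^j (i ≠ j), encoded by labelling
functions c, s with v ∈ V_{c v}^{s v}, such that each vertex of V_i^j has exactly
p neighbours in ⋃_{k ∉ {i,j}} V_j^k, exactly one neighbour in V_k^i for each
k ∉ {i,j}, and no other neighbours. -/
theorem stmt19 {V : Type*} [Fintype V] (G : SimpleGraph V) (p : ℕ) (hp : 2 ≤ p)
    (hreg : ∀ v : V, (G.neighborSet v).ncard = 2 * p) :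
    (∃ f : V → Fin (p + 2), IsStarColoring G f) ↔
      ∃ c s : V → Fin (p + 2), (∀ v : V, c v ≠ s v) ∧
        ∀ v : V,
          ({u : V | G.Adj v u ∧ c u = s v ∧ s u ≠ c v}.ncard = p) ∧
          (∀ k : Fin (p + 2), k ≠ c v → k ≠ s v →
            {u : V | G.Adj v u ∧ c u = k ∧ s u = c v}.ncard = 1) ∧
          (∀ u : V, G.Adj v u →
            (c u = s v ∧ s u ≠ c v) ∨ (c u ≠ s v ∧ s u = c v)) := by
  classical
  have hG : G.IsRegularOfDegree (2 * p) := fun v => by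
    rw [← G.ncard_neighborSet_eq_degree, hreg v]
  constructor
  · rintro ⟨f, hf⟩
    exact ⟨f, hG.exists_partition_of_isStarColoring hp (Fintype.card_fin _) hf⟩
  · rintro ⟨c, s, hcs, hv⟩
    refine ⟨c, G.isStarColoring_of_partition hcs (fun v k hkc hks => ?_) fun v => (hv v).2.2⟩
    obtain ⟨u, hu⟩ := Set.ncard_eq_one.mp ((hv v).2.1 k hkc hks)
    exact hu ▸ Set.subsingleton_singleton
end
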